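/- arXiv:1302.3652 — 4 statements merged into one kernel-verified Lean document; each statement's English description precedes it below -/
import Mathlib

section
/- Let g = [[a,b],[c,d]] ∈ SL(2,ℂ) with c ≠ 0, let q = z + t·j with z ∈ ℂ, t > 0, and write g•q = z′ + t′·j. Set λ = |cz + d|² + |c|²·t². Then |a − c·z′|² + |c|²·t′² = 1/λ. Consequently: if q lies on the isometric sphere I(g) (i.e. λ = 1), then g•q lies on the isometric sphere I(g⁻¹) (i.e. |a − c·z′|² + |c|²·t′² = 1), and if q lies in the open half-ball B(g) bounded by I(g) (i.e. λ < 1), then g•q lies in the exterior of the closed half-ball bounded by I(g⁻¹) (i.e. |a − c·z′|² + |c|²·t′² > 1). Thus g takes I(g) to I(g⁻¹), sending the half-space B(g) to the exterior of B(g⁻¹). -/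
noncomputable section

/-- The embedding of `ℂ` into the quaternions `ℍ = Quaternion ℝ`,
sending `x + iy` to `⟨x, y, 0, 0⟩`. -/
def toQ (z : ℂ) : Quaternion ℝ := ⟨z.re, z.im, 0, 0⟩

/-- The quaternion `j = ⟨0, 0, 1, 0⟩`. -/
def jq : Quaternion ℝ := ⟨0, 0, 1, 0⟩

/-- The Möbius action of the matrix `[[a,b],[c,d]]` on the quaternions:
`q ↦ (a·q + b)·(c·q + d)⁻¹`. -/
def mob (a b c d : ℂ) (q : Quaternion ℝ) : Quaternion ℝ :=
  (toQ a * q + toQ b) * (toQ c * q + toQ d)⁻¹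

/-!
Write `q = z + t·j` and `p = g•q`. Since `a` and `c` commute in `ℍ`, clearing the denominator
gives `(a - c·p)(c·q + d) = ad - bc = 1`, i.e. `a - c·p = (c·q + d)⁻¹`. The quaternion norm is
multiplicative, and for `w, u ∈ ℂ` the norm of `w + u·j` is `|w|² + |u|²`; so the two sides of
this identity have squared norms `|a - c·z'|² + |c|²·t'²` and `1/λ`.
-/

open Quaternion

theorem sub_mul_mul_add_inv_eq {K : Type*} [DivisionRing K] {a b c d q : K} (hac : Commute a c)
    (hq : c * q + d ≠ 0) :
    a - c * ((a * q + b) * (c * q + d)⁻¹) = (a * d - c * b) * (c * q + d)⁻¹ := by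
  rw [eq_mul_inv_iff_mul_eq₀ hq, sub_mul, mul_assoc c, inv_mul_cancel_right₀ hq,
    mul_add, mul_add, ← mul_assoc, ← mul_assoc, hac.eq]
  abel

@[simp] theorem re_toQ (w : ℂ) : (toQ w).re = w.re := rfl
@[simp] theorem imI_toQ (w : ℂ) : (toQ w).imI = w.im := rfl
@[simp] theorem imJ_toQ (w : ℂ) : (toQ w).imJ = 0 := rfl
@[simp] theorem imK_toQ (w : ℂ) : (toQ w).imK = 0 := rfl

@[simp] theorem re_jq : jq.re = 0 := rfl
@[simp] theorem imI_jq : jq.imI = 0 := rfl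
@[simp] theorem imJ_jq : jq.imJ = 1 := rfl
@[simp] theorem imK_jq : jq.imK = 0 := rfl

theorem toQ_one : toQ 1 = 1 := by
  ext <;> simp

theorem toQ_neg (w : ℂ) : toQ (-w) = -toQ w := by
  ext <;> simp

theorem toQ_sub (w u : ℂ) : toQ (w - u) = toQ w - toQ u := by
  ext <;> simp

theorem toQ_mul (w u : ℂ) : toQ (w * u) = toQ w * toQ u := by
  ext <;> simp

theorem commute_toQ (w u : ℂ) : Commute (toQ w) (toQ u) := by
  rw [Commute, SemiconjBy, ← toQ_mul, ← toQ_mul, mul_comm]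

theorem normSq_toQ_mul_add (c d z : ℂ) (t : ℝ) :
    normSq (toQ c * (toQ z + t • jq) + toQ d) = ‖c * z + d‖ ^ 2 + ‖c‖ ^ 2 * t ^ 2 := by
  simp only [normSq_def', Complex.sq_norm, Complex.normSq_apply, re_add, re_mul, re_smul, imI_add,
    imI_mul, imI_smul, imJ_add, imJ_mul, imJ_smul, imK_add, imK_mul, imK_smul, re_toQ, imI_toQ,
    imJ_toQ, imK_toQ, re_jq, imI_jq, imJ_jq, imK_jq, smul_eq_mul, Complex.add_re, Complex.mul_re,
    Complex.add_im, Complex.mul_im]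
  ring

theorem sub_mul_mob_eq_inv {a b c d : ℂ} (hdet : a * d - b * c = 1) {q : Quaternion ℝ}
    (hq : toQ c * q + toQ d ≠ 0) : toQ a - toQ c * mob a b c d q = (toQ c * q + toQ d)⁻¹ := by
  rw [mob, sub_mul_mul_add_inv_eq (commute_toQ a c) hq, ← toQ_mul, ← toQ_mul, ← toQ_sub,
    mul_comm c b, hdet, toQ_one, one_mul]

/-- Let `g = [[a,b],[c,d]] ∈ SL(2,ℂ)` with `c ≠ 0`, `q = z + t·j` with
`t > 0`, and write `g•q = z′ + t′·j`.  Set `λ = |cz+d|² + |c|²t²`.  Then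
`|a − c·z′|² + |c|²·t′² = 1/λ`.  Consequently: if `q` lies on `I(g)` (`λ = 1`) then
`g•q` lies on `I(g⁻¹)`, and if `q` lies in the open half-ball `B(g)` (`λ < 1`) then
`g•q` lies in the exterior of the closed half-ball bounded by `I(g⁻¹)`. -/
theorem statement4 (a b c d : ℂ) (hdet : a * d - b * c = 1) (hc : c ≠ 0)
    (z z' : ℂ) (t t' : ℝ) (ht : 0 < t)
    (himg : mob a b c d (toQ z + t • jq) = toQ z' + t' • jq) :
    ‖a - c * z'‖ ^ 2 + ‖c‖ ^ 2 * t' ^ 2 =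
      1 / (‖c * z + d‖ ^ 2 + ‖c‖ ^ 2 * t ^ 2) ∧
    (‖c * z + d‖ ^ 2 + ‖c‖ ^ 2 * t ^ 2 = 1 →
      ‖a - c * z'‖ ^ 2 + ‖c‖ ^ 2 * t' ^ 2 = 1) ∧
    (‖c * z + d‖ ^ 2 + ‖c‖ ^ 2 * t ^ 2 < 1 →
      1 < ‖a - c * z'‖ ^ 2 + ‖c‖ ^ 2 * t' ^ 2) := by
  have hpos : 0 < ‖c * z + d‖ ^ 2 + ‖c‖ ^ 2 * t ^ 2 := by positivity
  have hq : toQ c * (toQ z + t • jq) + toQ d ≠ 0 := by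
    rw [Ne, ← normSq_eq_zero, normSq_toQ_mul_add]
    exact hpos.ne'
  have hinv : toQ (-c) * (toQ z' + t' • jq) + toQ a = (toQ c * (toQ z + t • jq) + toQ d)⁻¹ := by
    rw [toQ_neg, neg_mul, neg_add_eq_sub, ← himg, sub_mul_mob_eq_inv hdet hq]
  have hnorm : ‖a - c * z'‖ ^ 2 + ‖c‖ ^ 2 * t' ^ 2 =
      1 / (‖c * z + d‖ ^ 2 + ‖c‖ ^ 2 * t ^ 2) := by
    have := congrArg normSq hinv
    rwa [map_inv₀, normSq_toQ_mul_add, normSq_toQ_mul_add, norm_neg, neg_mul, neg_add_eq_sub,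
      ← one_div] at this
  refine ⟨hnorm, fun h => by rw [hnorm, h, div_one], fun h => hnorm ▸ one_lt_one_div hpos h⟩
end
end

section
/- (Shimizu–Leutbecher lemma.) Let Γ be a subgroup of SL(2,ℂ) that is discrete, i.e. the subspace topology Γ inherits from the matrix topology on SL(2,ℂ) is discrete. Suppose the parabolic translation [[1,ω],[0,1]] belongs to Γ for some ω ∈ ℂ with ω ≠ 0, and suppose [[a,b],[c,d]] ∈ Γ with c ≠ 0. Then 1/|c| ≤ |ω|. In other words, the radius 1/|c| of the isometric sphere of any element of Γ not fixing ∞ is at most the translation length |ω| of any nontrivial parabolic translation in Γ fixing ∞. -/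
/-!
Shimizu's argument. Conjugating the translation `T = [[1,ω],[0,1]]` repeatedly by
`g₀ = g`, `gₙ₊₁ = gₙ T gₙ⁻¹`, the lower-left entries satisfy `cₙ₊₁ ω = -(cₙ ω)²`. If
`|c ω| < 1` this forces `cₙ ω → 0` doubly exponentially, and then `gₙ → T`, all while
`cₙ ≠ 0`. A discrete group cannot contain such a sequence.
-/

/-- The topology on `SL(2,ℂ)` induced from the usual topology on `2×2` complex
matrices via the inclusion. -/
noncomputable instance : TopologicalSpace (Matrix.SpecialLinearGroup (Fin 2) ℂ) :=
  TopologicalSpace.induced (fun g => (g : Matrix (Fin 2) (Fin 2) ℂ)) inferInstance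

open Filter Topology

section Recursion

lemma le_pow_succ_of_le_sq {s : ℕ → ℝ} {r : ℝ} (hs : ∀ n, 0 ≤ s n)
    (hsq : ∀ n, s (n + 1) ≤ s n ^ 2) (h0 : s 0 ≤ r) (hr : r ≤ 1) (n : ℕ) :
    s n ≤ r ^ (n + 1) := by
  have hr0 : 0 ≤ r := (hs 0).trans h0
  induction n with
  | zero => simpa using h0
  | succ n ih =>
    calc s (n + 1) ≤ (r ^ (n + 1)) ^ 2 := (hsq n).trans (pow_le_pow_left₀ (hs n) ih 2)
      _ = r ^ (2 * n + 2) := by ring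
      _ ≤ r ^ (n + 1 + 1) := pow_le_pow_of_le_one hr0 hr (by omega)

variable {𝕜 : Type*} [NormedField 𝕜]

lemma norm_le_norm_add_of_eq_one_sub_mul {a x : ℕ → 𝕜} (ha : ∀ n, a (n + 1) = 1 - a n * x n)
    (hx : ∀ n, ‖x n‖ ≤ 1) (n : ℕ) : ‖a n‖ ≤ ‖a 0‖ + n := by
  induction n with
  | zero => simp
  | succ n ih =>
    calc ‖a (n + 1)‖ ≤ 1 + ‖a n‖ * ‖x n‖ := by
          rw [ha, ← norm_one (α := 𝕜), ← norm_mul]; exact norm_sub_le _ _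
      _ ≤ 1 + (‖a 0‖ + n) * 1 := by gcongr; exact hx n
      _ = ‖a 0‖ + (n + 1 : ℕ) := by push_cast; ring

lemma tendsto_add_mul_pow_succ_zero {A r : ℝ} (hr0 : 0 ≤ r) (hr1 : r < 1) :
    Tendsto (fun n : ℕ => (A + n) * r ^ (n + 1)) atTop (𝓝 0) := by
  have h := ((tendsto_pow_atTop_nhds_zero_of_lt_one hr0 hr1).const_mul A).add
    (tendsto_self_mul_const_pow_of_lt_one hr0 hr1)
  simpa [add_mul, pow_succ, mul_assoc] using (h.mul_const r)

/-- The `aₙ` grow at most linearly while the `xₙ` decay geometrically. -/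
lemma tendsto_zero_of_eq_neg_sq {a x : ℕ → 𝕜} (hx : ∀ n, x (n + 1) = -x n ^ 2)
    (ha : ∀ n, a (n + 1) = 1 - a n * x n) (hx0 : ‖x 0‖ < 1) :
    Tendsto x atTop (𝓝 0) ∧ Tendsto (fun n => a n * x n) atTop (𝓝 0) := by
  have hpow : ∀ n, ‖x n‖ ≤ ‖x 0‖ ^ (n + 1) :=
    le_pow_succ_of_le_sq (fun _ => norm_nonneg _) (fun n => by simp [hx]) le_rfl hx0.le
  have hle : ∀ n, ‖x n‖ ≤ 1 := fun n => (hpow n).trans (pow_le_one₀ (norm_nonneg _) hx0.le)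
  refine ⟨squeeze_zero_norm hpow ?_, squeeze_zero_norm (fun n => ?_)
    (tendsto_add_mul_pow_succ_zero (A := ‖a 0‖) (norm_nonneg _) hx0)⟩
  · exact (tendsto_add_atTop_iff_nat 1).2
      (tendsto_pow_atTop_nhds_zero_of_lt_one (norm_nonneg _) hx0)
  · rw [norm_mul]
    exact mul_le_mul (norm_le_norm_add_of_eq_one_sub_mul ha hle n) (hpow n) (norm_nonneg _)
      (by positivity)

end Recursion

lemma Filter.Tendsto.eventually_eq_of_discreteTopology {X ι : Type*} [TopologicalSpace X]
    {s : Set X} [DiscreteTopology s] {l : Filter ι} {u : ι → X} {x : X} (hu : ∀ i, u i ∈ s)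
    (hx : x ∈ s) (h : Tendsto u l (𝓝 x)) : ∀ᶠ i in l, u i = x := by
  have hs : Tendsto (fun i => (⟨u i, hu i⟩ : s)) l (𝓝 ⟨x, hx⟩) := tendsto_subtype_rng.2 h
  rw [nhds_discrete, tendsto_pure] at hs
  exact hs.mono fun _ hi => congrArg Subtype.val hi

lemma Matrix.SpecialLinearGroup.tendsto_nhds_iff_entries {ι : Type*} {l : Filter ι}
    {u : ι → Matrix.SpecialLinearGroup (Fin 2) ℂ} {g : Matrix.SpecialLinearGroup (Fin 2) ℂ} :
    Tendsto u l (𝓝 g) ↔ ∀ i j, Tendsto (fun n => u n i j) l (𝓝 (g i j)) :=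
  (Topology.IsInducing.induced _).tendsto_nhds_iff.trans <|
    tendsto_pi_nhds.trans <| forall_congr' fun _ => tendsto_pi_nhds

namespace Matrix.SpecialLinearGroup

noncomputable def parabolic (ω : ℂ) : SpecialLinearGroup (Fin 2) ℂ :=
  ⟨!![1, ω; 0, 1], by simp [Matrix.det_fin_two_of]⟩

lemma coe_mul_parabolic_mul_inv (ω : ℂ) (h : SpecialLinearGroup (Fin 2) ℂ) :
    ((h * parabolic ω * h⁻¹ : SpecialLinearGroup (Fin 2) ℂ) : Matrix (Fin 2) (Fin 2) ℂ) =
      !![1 - h 0 0 * h 1 0 * ω, h 0 0 ^ 2 * ω; -(h 1 0 ^ 2 * ω), 1 + h 0 0 * h 1 0 * ω] := by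
  have hdet : h 0 0 * h 1 1 - h 0 1 * h 1 0 = 1 := by rw [← det_fin_two, h.det_coe]
  rw [coe_mul, coe_mul, coe_inv, adjugate_fin_two]
  ext i j
  fin_cases i <;> fin_cases j <;> simp [parabolic, Matrix.mul_apply, Fin.sum_univ_two]
  · linear_combination hdet
  · ring
  · ring
  · linear_combination hdet

noncomputable def shimizuSeq (ω : ℂ) (g : SpecialLinearGroup (Fin 2) ℂ) (n : ℕ) :
    SpecialLinearGroup (Fin 2) ℂ :=
  (fun h => h * parabolic ω * h⁻¹)^[n] g

variable {ω : ℂ} {g : SpecialLinearGroup (Fin 2) ℂ}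

lemma shimizuSeq_succ (n : ℕ) :
    shimizuSeq ω g (n + 1) = shimizuSeq ω g n * parabolic ω * (shimizuSeq ω g n)⁻¹ :=
  Function.iterate_succ_apply' _ _ _

lemma shimizuSeq_mem {Γ : Subgroup (SpecialLinearGroup (Fin 2) ℂ)} (hg : g ∈ Γ)
    (hpar : parabolic ω ∈ Γ) (n : ℕ) : shimizuSeq ω g n ∈ Γ := by
  induction n with
  | zero => exact hg
  | succ n ih => rw [shimizuSeq_succ]; exact Γ.mul_mem (Γ.mul_mem ih hpar) (Γ.inv_mem ih)

lemma coe_shimizuSeq_succ (n : ℕ) :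
    (shimizuSeq ω g (n + 1) : Matrix (Fin 2) (Fin 2) ℂ) =
      !![1 - shimizuSeq ω g n 0 0 * shimizuSeq ω g n 1 0 * ω, shimizuSeq ω g n 0 0 ^ 2 * ω;
        -(shimizuSeq ω g n 1 0 ^ 2 * ω), 1 + shimizuSeq ω g n 0 0 * shimizuSeq ω g n 1 0 * ω] := by
  rw [shimizuSeq_succ, coe_mul_parabolic_mul_inv]

lemma shimizuSeq_succ_one_zero (n : ℕ) :
    shimizuSeq ω g (n + 1) 1 0 = -(shimizuSeq ω g n 1 0 ^ 2 * ω) := by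
  simp [coe_shimizuSeq_succ]

lemma shimizuSeq_one_zero_ne_zero (hω : ω ≠ 0) (hc : g 1 0 ≠ 0) (n : ℕ) :
    shimizuSeq ω g n 1 0 ≠ 0 := by
  induction n with
  | zero => exact hc
  | succ n ih =>
    rw [shimizuSeq_succ_one_zero]
    exact neg_ne_zero.2 (mul_ne_zero (pow_ne_zero 2 ih) hω)

lemma tendsto_shimizuSeq (hω : ω ≠ 0) (hg : ‖g 1 0 * ω‖ < 1) :
    Tendsto (shimizuSeq ω g) atTop (𝓝 (parabolic ω)) := by
  set a := fun n => shimizuSeq ω g n 0 0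
  set x := fun n => shimizuSeq ω g n 1 0 * ω
  obtain ⟨hx, hax⟩ := tendsto_zero_of_eq_neg_sq (a := a) (x := x)
    (fun n => by simp only [x, shimizuSeq_succ_one_zero]; ring)
    (fun n => by simp [a, x, coe_shimizuSeq_succ, mul_assoc]) hg
  have ha : Tendsto a atTop (𝓝 1) := (tendsto_add_atTop_iff_nat 1).1 <| by
    simpa [a, x, coe_shimizuSeq_succ, mul_assoc] using tendsto_const_nhds.sub hax
  rw [tendsto_nhds_iff_entries]
  intro i j
  fin_cases i <;> fin_cases j
  · simpa [parabolic] using ha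
  · refine (tendsto_add_atTop_iff_nat 1).1 ?_
    simpa [parabolic, coe_shimizuSeq_succ] using (ha.pow 2).mul_const ω
  · simpa [parabolic, x, hω] using hx.mul_const ω⁻¹
  · refine (tendsto_add_atTop_iff_nat 1).1 ?_
    simpa [parabolic, x, a, coe_shimizuSeq_succ, mul_assoc] using
      tendsto_const_nhds.add hax

end Matrix.SpecialLinearGroup

open Matrix.SpecialLinearGroup

/-- Shimizu–Leutbecher lemma: let `Γ ≤ SL(2,ℂ)` be discrete (in the
subspace topology from the matrix topology), containing the parabolic translation
`[[1,ω],[0,1]]` with `ω ≠ 0`.  If `[[a,b],[c,d]] ∈ Γ` with `c ≠ 0`, then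
`1/|c| ≤ |ω|`: the radius of the isometric sphere of any element of `Γ` not fixing
`∞` is at most the translation length of the parabolic. -/
theorem statement6 (Γ : Subgroup (Matrix.SpecialLinearGroup (Fin 2) ℂ))
    (hdisc : DiscreteTopology Γ) (ω : ℂ) (hω : ω ≠ 0)
    (hpar : (⟨!![1, ω; 0, 1], by simp [Matrix.det_fin_two_of]⟩ :
      Matrix.SpecialLinearGroup (Fin 2) ℂ) ∈ Γ)
    (g : Matrix.SpecialLinearGroup (Fin 2) ℂ) (hg : g ∈ Γ)
    (hc : (g : Matrix (Fin 2) (Fin 2) ℂ) 1 0 ≠ 0) :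
    1 / ‖(g : Matrix (Fin 2) (Fin 2) ℂ) 1 0‖ ≤ ‖ω‖ := by
  by_contra! hlt
  have hsmall : ‖g 1 0 * ω‖ < 1 := by
    rw [norm_mul]; exact (lt_div_iff₀' (norm_pos_iff.2 hc)).1 hlt
  obtain ⟨n, hn⟩ := ((tendsto_shimizuSeq hω hsmall).eventually_eq_of_discreteTopology
    (s := Γ) (shimizuSeq_mem hg hpar) hpar).exists
  exact shimizuSeq_one_zero_ne_zero hω hc n (by simp [hn, parabolic])
end

section
/- Let b ∈ ℂ with Im b > 0, |Re b| ≤ 1/2, and |b| ≥ 1 (so that 1 is a shortest nonzero vector of the lattice Λ = ℤ·1 + ℤ·b, and b is a shortest vector of Λ independent of 1). Let y ∈ ℂ satisfy |y| ≤ |y − (m + n·b)| for all integers m, n (i.e. y is at least as close to 0 as to every other lattice point). Then for all integers p, q: if |y − (p + q·b)| < 2, then |p| ≤ 3 and |q| ≤ 3. -/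
/-!
Write `t = Im b`. Since `|Re b| ≤ 1/2 ≤ |b|`, we have `t² ≥ 3/4`. Comparing `‖y‖` with the
distance from `y` to `±1` and `±b` bounds the inner products: `|Re y| ≤ 1/2` and
`|⟪y, b⟫| ≤ ‖b‖²/2`, whence `|Im y|·t ≤ t²/2 + 3/8`. If `‖y - (p + q b)‖ < 2`, the imaginary
part gives `|q|·t² < 2t + |Im y|·t ≤ 2t + t²/2 + 3/8`, which fails for `|q| ≥ 4` as soon as
`t ≥ 4/5`; then the real part gives `|p| < |Re y| + |q|·|Re b| + 2 ≤ 4`.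
-/

open scoped RealInnerProductSpace

section InnerProductSpace

variable {E : Type*} [NormedAddCommGroup E] [InnerProductSpace ℝ E] {y v : E}

theorem two_inner_le_sq_norm_of_norm_le_norm_sub (h : ‖y‖ ≤ ‖y - v‖) :
    2 * ⟪y, v⟫ ≤ ‖v‖ ^ 2 := by
  have := pow_le_pow_left₀ (norm_nonneg y) h 2
  rw [norm_sub_sq_real] at this
  linarith

theorem abs_inner_le_of_norm_le_norm_sub_of_norm_le_norm_add (h₁ : ‖y‖ ≤ ‖y - v‖)
    (h₂ : ‖y‖ ≤ ‖y + v‖) : |⟪y, v⟫| ≤ ‖v‖ ^ 2 / 2 := by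
  have hv := two_inner_le_sq_norm_of_norm_le_norm_sub h₁
  have hnegv := two_inner_le_sq_norm_of_norm_le_norm_sub (v := -v) (by rwa [sub_neg_eq_add])
  rw [inner_neg_right, norm_neg] at hnegv
  rw [abs_le]
  constructor <;> linarith

end InnerProductSpace

theorem Int.abs_le_three_of_abs_sub_intCast_lt_two {x : ℝ} {p : ℤ} (hx : |x| ≤ 2)
    (h : |x - p| < 2) : |p| ≤ 3 := by
  have : |(p : ℝ)| < 4 := by
    linarith [abs_sub_abs_le_abs_sub (p : ℝ) x, abs_sub_comm (p : ℝ) x]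
  rw [← Int.cast_abs] at this
  exact Int.lt_add_one_iff.mp (by exact_mod_cast this)

theorem Int.abs_le_three_of_abs_sub_intCast_mul_lt_two {u t : ℝ} {q : ℤ} (ht : 0 < t)
    (ht_sq : 3 / 4 ≤ t ^ 2) (hu : |u| * t ≤ t ^ 2 / 2 + 3 / 8) (h : |u - q * t| < 2) :
    |q| ≤ 3 := by
  have hqt : |(q : ℝ)| * t < 2 + |u| := by
    calc |(q : ℝ)| * t = |q * t| := by rw [abs_mul, abs_of_pos ht]
      _ < 2 + |u| := by linarith [abs_sub_abs_le_abs_sub (q * t) u, abs_sub_comm (q * t) u]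
  have ht' : 4 / 5 < t := by nlinarith
  by_contra! hq
  have hq : (4 : ℝ) ≤ |(q : ℝ)| := by rw [← Int.cast_abs]; exact_mod_cast hq
  nlinarith [mul_lt_mul_of_pos_right hqt ht, mul_le_mul_of_nonneg_right hq (sq_nonneg t)]

namespace Complex

theorem sq_norm_eq_re_sq_add_im_sq (z : ℂ) : ‖z‖ ^ 2 = z.re ^ 2 + z.im ^ 2 := by
  rw [Complex.sq_norm, normSq_apply]
  ring

theorem three_quarters_le_im_sq {b : ℂ} (hre : |b.re| ≤ 1 / 2) (hnorm : 1 ≤ ‖b‖) :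
    3 / 4 ≤ b.im ^ 2 := by
  have h1 : 1 ≤ b.re ^ 2 + b.im ^ 2 := by
    rw [← sq_norm_eq_re_sq_add_im_sq]
    nlinarith
  nlinarith [sq_abs b.re, abs_nonneg b.re]

section VoronoiCell

variable {b y : ℂ} (hy : ∀ m n : ℤ, ‖y‖ ≤ ‖y - ((m : ℂ) + (n : ℂ) * b)‖)
include hy

theorem abs_inner_lattice_le_of_forall_norm_le (m n : ℤ) :
    |⟪y, (m : ℂ) + n * b⟫| ≤ ‖(m : ℂ) + n * b‖ ^ 2 / 2 :=
  abs_inner_le_of_norm_le_norm_sub_of_norm_le_norm_add (hy m n) <| by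
    simpa only [Int.cast_neg, neg_mul, ← neg_add, sub_neg_eq_add] using hy (-m) (-n)

theorem abs_re_le_half_of_forall_norm_le : |y.re| ≤ 1 / 2 := by
  simpa [Complex.inner] using abs_inner_lattice_le_of_forall_norm_le hy 1 0

theorem abs_im_mul_im_le_of_forall_norm_le (hre : |b.re| ≤ 1 / 2) (him : 0 < b.im) :
    |y.im| * b.im ≤ b.im ^ 2 / 2 + 3 / 8 := by
  have hb : |y.re * b.re + y.im * b.im| ≤ (b.re ^ 2 + b.im ^ 2) / 2 := by
    simpa [Complex.inner, sq_norm_eq_re_sq_add_im_sq, mul_comm] using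
      abs_inner_lattice_le_of_forall_norm_le hy 0 1
  have hyb : |y.re * b.re| ≤ 1 / 4 := by
    rw [abs_mul]
    nlinarith [abs_re_le_half_of_forall_norm_le hy, abs_nonneg y.re, abs_nonneg b.re]
  have hbre : b.re ^ 2 ≤ 1 / 4 := by nlinarith [sq_abs b.re, abs_nonneg b.re]
  rw [show |y.im| * b.im = |y.im * b.im| by rw [abs_mul, abs_of_pos him], abs_le]
  obtain ⟨hb₁, hb₂⟩ := abs_le.mp hb
  obtain ⟨hyb₁, hyb₂⟩ := abs_le.mp hyb
  constructor <;> linarith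

end VoronoiCell

end Complex

/-- Let `b ∈ ℂ` with `Im b > 0`, `|Re b| ≤ 1/2` and `|b| ≥ 1`, so that
`1` is a shortest nonzero vector of the lattice `ℤ + ℤ·b` and `b` a shortest vector
independent of `1`.  If `y ∈ ℂ` is at least as close to `0` as to every other point
of the lattice, then every lattice point `p + q·b` at distance less than `2` from `y`
satisfies `|p| ≤ 3` and `|q| ≤ 3`. -/
theorem statement7 (b : ℂ) (him : 0 < b.im) (hre : |b.re| ≤ 1 / 2)
    (hnorm : 1 ≤ ‖b‖) (y : ℂ)
    (hy : ∀ m n : ℤ, ‖y‖ ≤ ‖y - ((m : ℂ) + (n : ℂ) * b)‖) :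
    ∀ p q : ℤ, ‖y - ((p : ℂ) + (q : ℂ) * b)‖ < 2 → |p| ≤ 3 ∧ |q| ≤ 3 := by
  intro p q hpq
  have hq : |q| ≤ 3 := by
    refine Int.abs_le_three_of_abs_sub_intCast_mul_lt_two him
      (Complex.three_quarters_le_im_sq hre hnorm)
      (Complex.abs_im_mul_im_le_of_forall_norm_le hy hre him) ?_
    simpa using (Complex.abs_im_le_norm _).trans_lt hpq
  refine ⟨Int.abs_le_three_of_abs_sub_intCast_lt_two (x := y.re - q * b.re) ?_ ?_, hq⟩
  · have hqb : |(q : ℝ) * b.re| ≤ 3 / 2 := by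
      rw [abs_mul, ← Int.cast_abs]
      have : ((|q| : ℤ) : ℝ) ≤ 3 := by exact_mod_cast hq
      nlinarith [abs_nonneg b.re]
    linarith [abs_sub y.re ((q : ℝ) * b.re), Complex.abs_re_le_half_of_forall_norm_le hy]
  · have := (Complex.abs_re_le_norm _).trans_lt hpq
    simp only [Complex.sub_re, Complex.add_re, Complex.intCast_re, Complex.mul_re,
      Complex.intCast_im, zero_mul, sub_zero] at this
    rwa [sub_right_comm, sub_sub]
end

section
/- Let t₋ < t₊ be real numbers, and let x₁, x₂ : ℝ → ℂ and r₁, r₂ : ℝ → ℝ be real analytic on an open set containing [t₋, t₊], with r₁(t) > 0 and r₂(t) > 0 for all t ∈ [t₋, t₊]. Then the set of times at which the second disk is covered by the first, {t ∈ [t₋, t₊] : closedBall(x₂(t), r₂(t)) ⊆ closedBall(x₁(t), r₁(t))} (closed balls taken in ℂ), is a finite union of closed intervals and points: there exist n ∈ ℕ and aᵢ ≤ bᵢ (i = 1, …, n) with [aᵢ, bᵢ] ⊆ [t₋, t₊] whose union is this set. -/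
/-!
A closed disk `D(x₂, r₂)` lies in `D(x₁, r₁)` iff `r₂ + |x₁ - x₂| ≤ r₁`, i.e. iff both
`g = r₁ - r₂` and `g² - |x₁ - x₂|²` are nonnegative. These two functions are real analytic,
and the set where a real analytic function is nonnegative on a compact interval is a finite union of
closed intervals: either the function vanishes identically, or it has finitely many zeros and
the intermediate value theorem shows that between two consecutive zeros it keeps its sign.
Finite unions of closed intervals are closed under intersection.
-/

open Set Metric

section ClosedBall

variable {E : Type*} [NormedAddCommGroup E] [NormedSpace ℝ E] [Nontrivial E]

theorem exists_norm_eq_sameRay (w : E) {r : ℝ} (hr : 0 ≤ r) :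
    ∃ v : E, ‖v‖ = r ∧ SameRay ℝ w v := by
  by_cases hw : w = 0
  · obtain ⟨v, hv⟩ := exists_norm_eq E hr
    exact ⟨v, hv, hw ▸ SameRay.zero_left v⟩
  · refine ⟨(r / ‖w‖) • w, ?_, SameRay.sameRay_nonneg_smul_right w (by positivity)⟩
    rw [norm_smul, Real.norm_of_nonneg (by positivity), div_mul_cancel₀ r (norm_ne_zero_iff.2 hw)]

theorem closedBall_subset_closedBall_iff {x y : E} {r R : ℝ} (hr : 0 ≤ r) :
    closedBall x r ⊆ closedBall y R ↔ r + dist x y ≤ R := by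
  refine ⟨fun h => ?_, closedBall_subset_closedBall'⟩
  obtain ⟨v, hv, hray⟩ := exists_norm_eq_sameRay (x - y) hr
  have hmem : x + v ∈ closedBall x r := by simp [hv]
  have hdist : dist (x + v) y = r + dist x y := by
    rw [dist_eq_norm, add_sub_right_comm, hray.norm_add, hv, dist_eq_norm, add_comm]
  simpa [hdist] using h hmem

end ClosedBall

def IsFiniteUnionOfIcc (I S : Set ℝ) : Prop :=
  ∃ (n : ℕ) (a b : Fin n → ℝ),
    (∀ i, a i ≤ b i) ∧ (∀ i, Icc (a i) (b i) ⊆ I) ∧ S = ⋃ i, Icc (a i) (b i)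

namespace IsFiniteUnionOfIcc

variable {I S T : Set ℝ}

theorem iUnion {ι : Type*} [Finite ι] {a b : ι → ℝ} (h : ∀ i, Icc (a i) (b i) ⊆ I) :
    IsFiniteUnionOfIcc I (⋃ i, Icc (a i) (b i)) := by
  let e := Finite.equivFin {i // a i ≤ b i}
  refine ⟨_, fun k => a (e.symm k), fun k => b (e.symm k), fun k => (e.symm k).2,
    fun k => h _, ?_⟩
  ext t
  simp only [mem_iUnion]
  constructor
  · rintro ⟨i, hi⟩
    exact ⟨e ⟨i, hi.1.trans hi.2⟩, by simpa using hi⟩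
  · rintro ⟨k, hk⟩
    exact ⟨_, hk⟩

theorem inter (hS : IsFiniteUnionOfIcc I S) (hT : IsFiniteUnionOfIcc I T) :
    IsFiniteUnionOfIcc I (S ∩ T) := by
  obtain ⟨n, a, b, -, hab, rfl⟩ := hS
  obtain ⟨m, c, d, -, hcd, rfl⟩ := hT
  have hunion : (⋃ i, Icc (a i) (b i)) ∩ ⋃ j, Icc (c j) (d j) =
      ⋃ ij : Fin n × Fin m, Icc (max (a ij.1) (c ij.2)) (min (b ij.1) (d ij.2)) := by
    simp only [iUnion_inter_iUnion, Icc_inter_Icc, iUnion_prod']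
  rw [hunion]
  exact iUnion fun ij => (Icc_inter_Icc.symm.subset.trans inter_subset_left).trans (hab ij.1)

end IsFiniteUnionOfIcc

section Superlevel

variable {ψ : ℝ → ℝ}

theorem ContinuousOn.nonneg_of_no_zero_Ico {t q : ℝ} (hψ : ContinuousOn ψ (Icc t q)) (ht : 0 ≤ ψ t)
    (hzero : ∀ c ∈ Ico t q, ψ c ≠ 0) : ∀ s ∈ Icc t q, 0 ≤ ψ s := by
  intro s hs
  by_contra! hneg
  obtain ⟨c, hc, hc0⟩ := intermediate_value_Icc' hs.1 (hψ.mono (Icc_subset_Icc_right hs.2))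
    ⟨hneg.le, ht⟩
  have hcs : c ≠ s := by rintro rfl; exact hneg.ne hc0
  exact hzero c ⟨hc.1, (lt_of_le_of_ne hc.2 hcs).trans_le hs.2⟩ hc0

theorem ContinuousOn.nonneg_of_no_zero_Ioc {p t : ℝ} (hψ : ContinuousOn ψ (Icc p t)) (ht : 0 ≤ ψ t)
    (hzero : ∀ c ∈ Ioc p t, ψ c ≠ 0) : ∀ s ∈ Icc p t, 0 ≤ ψ s := by
  intro s hs
  by_contra! hneg
  obtain ⟨c, hc, hc0⟩ := intermediate_value_Icc hs.2 (hψ.mono (Icc_subset_Icc_left hs.1))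
    ⟨hneg.le, ht⟩
  have hsc : s ≠ c := by rintro rfl; exact hneg.ne hc0
  exact hzero c ⟨hs.1.trans_lt (lt_of_le_of_ne hc.1 hsc), hc.2⟩ hc0

theorem IsFiniteUnionOfIcc.nonneg_of_finite_zeros {a b : ℝ} (hψ : ContinuousOn ψ (Icc a b))
    (hfin : {t ∈ Icc a b | ψ t = 0}.Finite) :
    IsFiniteUnionOfIcc (Icc a b) {t ∈ Icc a b | 0 ≤ ψ t} := by
  classical
  set S := {t ∈ Icc a b | 0 ≤ ψ t}
  let F : Finset ℝ := insert a (insert b hfin.toFinset)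
  have cover : ∀ t ∈ S, ∃ p ∈ F, ∃ q ∈ F, t ∈ Icc p q ∧ Icc p q ⊆ S := by
    rintro t ⟨ht, hψt⟩
    have hbelow : (F.filter (· ≤ t)).Nonempty := ⟨a, by simp [F, ht.1]⟩
    have habove : (F.filter (t ≤ ·)).Nonempty := ⟨b, by simp [F, ht.2]⟩
    obtain ⟨hpF, hpt⟩ := Finset.mem_filter.1 (Finset.max'_mem _ hbelow)
    obtain ⟨hqF, htq⟩ := Finset.mem_filter.1 (Finset.min'_mem _ habove)
    set p := (F.filter (· ≤ t)).max' hbelow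
    set q := (F.filter (t ≤ ·)).min' habove
    have hap : a ≤ p := Finset.le_max' _ a (by simp [F, ht.1])
    have hqb : q ≤ b := Finset.min'_le _ b (by simp [F, ht.2])
    have hpq : Icc p q ⊆ Icc a b := Icc_subset_Icc hap hqb
    have hzero_mem : ∀ c ∈ Icc p q, ψ c = 0 → c ∈ F := fun c hc hc0 =>
      Finset.mem_insert_of_mem (Finset.mem_insert_of_mem (hfin.mem_toFinset.2 ⟨hpq hc, hc0⟩))
    have hright : ∀ c ∈ Ico t q, ψ c ≠ 0 := fun c hc hc0 =>
      (Finset.min'_le _ c (Finset.mem_filter.2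
        ⟨hzero_mem c ⟨hpt.trans hc.1, hc.2.le⟩ hc0, hc.1⟩)).not_gt hc.2
    have hleft : ∀ c ∈ Ioc p t, ψ c ≠ 0 := fun c hc hc0 =>
      (Finset.le_max' _ c (Finset.mem_filter.2
        ⟨hzero_mem c ⟨hc.1.le, hc.2.trans htq⟩ hc0, hc.2⟩)).not_gt hc.1
    refine ⟨p, hpF, q, hqF, ⟨hpt, htq⟩, fun s hs => ⟨hpq hs, ?_⟩⟩
    rcases le_total s t with hst | hts
    · exact (hψ.mono (Icc_subset_Icc hap (htq.trans hqb))).nonneg_of_no_zero_Ioc hψt hleft s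
        ⟨hs.1, hst⟩
    · exact (hψ.mono (Icc_subset_Icc (hap.trans hpt) hqb)).nonneg_of_no_zero_Ico hψt hright s
        ⟨hts, hs.2⟩
  let P : Set (ℝ × ℝ) := {pq | pq ∈ F ×ˢ F ∧ Icc pq.1 pq.2 ⊆ S}
  have : Finite P := ((F ×ˢ F).finite_toSet.subset fun pq hpq => hpq.1).to_subtype
  have hS : S = ⋃ pq : P, Icc pq.1.1 pq.1.2 := by
    refine Subset.antisymm (fun t ht => ?_) (iUnion_subset fun pq => pq.2.2)
    obtain ⟨p, hp, q, hq, htpq, hsub⟩ := cover t ht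
    exact mem_iUnion.2 ⟨⟨(p, q), Finset.mem_product.2 ⟨hp, hq⟩, hsub⟩, htpq⟩
  rw [hS]
  exact IsFiniteUnionOfIcc.iUnion fun pq => pq.2.2.trans fun _ hs => hs.1

end Superlevel

theorem AnalyticOnNhd.eqOn_zero_or_finite_zeros {𝕜 E : Type*} [NontriviallyNormedField 𝕜]
    [NormedAddCommGroup E] [NormedSpace 𝕜 E] {f : 𝕜 → E} {K : Set 𝕜}
    (hf : AnalyticOnNhd 𝕜 f K) (hK : IsCompact K) (hK' : IsPreconnected K) :
    EqOn f 0 K ∨ {z ∈ K | f z = 0}.Finite :=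
  (hf.eqOn_zero_or_eventually_ne_zero_of_preconnected hK').imp_right fun h =>
    (hK.finite_sdiff_of_mem_codiscreteWithin h).subset fun _ ⟨hz, hz0⟩ => ⟨hz, not_not.2 hz0⟩

theorem IsFiniteUnionOfIcc.nonneg_of_analyticOnNhd {ψ : ℝ → ℝ} {a b : ℝ}
    (hψ : AnalyticOnNhd ℝ ψ (Icc a b)) :
    IsFiniteUnionOfIcc (Icc a b) {t ∈ Icc a b | 0 ≤ ψ t} := by
  rcases hψ.eqOn_zero_or_finite_zeros isCompact_Icc isPreconnected_Icc with hzero | hfin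
  · have hall : {t ∈ Icc a b | 0 ≤ ψ t} = ⋃ _ : Unit, Icc a b := by
      rw [iUnion_const]
      exact sep_eq_self_iff_mem_true.2 fun t ht => (hzero ht).ge
    rw [hall]
    exact IsFiniteUnionOfIcc.iUnion fun _ => subset_rfl
  · exact IsFiniteUnionOfIcc.nonneg_of_finite_zeros hψ.continuousOn hfin

theorem AnalyticOnNhd.norm_sq {f : ℝ → ℂ} {s : Set ℝ} (hf : AnalyticOnNhd ℝ f s) :
    AnalyticOnNhd ℝ (fun t => ‖f t‖ ^ 2) s := by
  have hre := Complex.reCLM.comp_analyticOnNhd hf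
  have him := Complex.imCLM.comp_analyticOnNhd hf
  have hnorm : (fun t => ‖f t‖ ^ 2) = fun t => (f t).re * (f t).re + (f t).im * (f t).im := by
    simp only [Complex.sq_norm, Complex.normSq_apply]
  rw [hnorm]
  exact (hre.mul hre).add (him.mul him)

theorem statement10_general (tm tp : ℝ) (U : Set ℝ)
    (hIcc : Icc tm tp ⊆ U)
    (x₁ x₂ : ℝ → ℂ) (r₁ r₂ : ℝ → ℝ)
    (hx₁ : AnalyticOnNhd ℝ x₁ U) (hx₂ : AnalyticOnNhd ℝ x₂ U)
    (hr₁ : AnalyticOnNhd ℝ r₁ U) (hr₂ : AnalyticOnNhd ℝ r₂ U)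
    (hr₂pos : ∀ t ∈ Icc tm tp, 0 < r₂ t) :
    ∃ (n : ℕ) (a b : Fin n → ℝ),
      (∀ i, a i ≤ b i) ∧ (∀ i, Icc (a i) (b i) ⊆ Icc tm tp) ∧
      {t ∈ Icc tm tp | closedBall (x₂ t) (r₂ t) ⊆ closedBall (x₁ t) (r₁ t)} =
        ⋃ i, Icc (a i) (b i) := by
  have hcover : {t ∈ Icc tm tp | closedBall (x₂ t) (r₂ t) ⊆ closedBall (x₁ t) (r₁ t)} =
      {t ∈ Icc tm tp | 0 ≤ r₁ t - r₂ t} ∩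
        {t ∈ Icc tm tp | 0 ≤ (r₁ t - r₂ t) ^ 2 - ‖x₁ t - x₂ t‖ ^ 2} := by
    ext t
    simp only [mem_inter_iff, mem_ofPred_eq, ← and_and_left]
    refine and_congr_right fun ht => ?_
    rw [closedBall_subset_closedBall_iff (hr₂pos t ht).le, dist_comm, dist_eq_norm,
      ← le_sub_iff_add_le']
    constructor
    · intro h
      exact ⟨(norm_nonneg _).trans h, sub_nonneg.2 (pow_le_pow_left₀ (norm_nonneg _) h 2)⟩
    · rintro ⟨hg, hsq⟩
      exact (sq_le_sq₀ (norm_nonneg _) hg).1 (sub_nonneg.1 hsq)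
  have hg : AnalyticOnNhd ℝ (fun t => r₁ t - r₂ t) (Icc tm tp) := (hr₁.sub hr₂).mono hIcc
  have hh : AnalyticOnNhd ℝ (fun t => (r₁ t - r₂ t) ^ 2 - ‖x₁ t - x₂ t‖ ^ 2) (Icc tm tp) :=
    (hg.pow 2).sub ((hx₁.sub hx₂).norm_sq.mono hIcc)
  rw [hcover]
  exact (IsFiniteUnionOfIcc.nonneg_of_analyticOnNhd hg).inter
    (IsFiniteUnionOfIcc.nonneg_of_analyticOnNhd hh)

/-- Lemma 5.3: Let `x₁, x₂ : ℝ → ℂ` and `r₁, r₂ : ℝ → ℝ` be real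
analytic on an open set containing `[t₋, t₊]`, with `r₁, r₂ > 0` on the interval.
Then the set of times at which the closed disk of center `x₂ t` and radius `r₂ t`
is contained in the closed disk of center `x₁ t` and radius `r₁ t` is a finite
union of closed intervals and points in `[t₋, t₊]`. -/
theorem statement10 (tm tp : ℝ) (htt : tm < tp) (U : Set ℝ) (hU : IsOpen U)
    (hIcc : Icc tm tp ⊆ U)
    (x₁ x₂ : ℝ → ℂ) (r₁ r₂ : ℝ → ℝ)
    (hx₁ : AnalyticOnNhd ℝ x₁ U) (hx₂ : AnalyticOnNhd ℝ x₂ U)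
    (hr₁ : AnalyticOnNhd ℝ r₁ U) (hr₂ : AnalyticOnNhd ℝ r₂ U)
    (hr₁pos : ∀ t ∈ Icc tm tp, 0 < r₁ t) (hr₂pos : ∀ t ∈ Icc tm tp, 0 < r₂ t) :
    ∃ (n : ℕ) (a b : Fin n → ℝ),
      (∀ i, a i ≤ b i) ∧ (∀ i, Icc (a i) (b i) ⊆ Icc tm tp) ∧
      {t ∈ Icc tm tp | closedBall (x₂ t) (r₂ t) ⊆ closedBall (x₁ t) (r₁ t)} =
        ⋃ i, Icc (a i) (b i) :=
  statement10_general tm tp U hIcc x₁ x₂ r₁ r₂ hx₁ hx₂ hr₁ hr₂ hr₂pos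
end
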